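/- For all μ > 0, σ > 0 and s ≠ 0, the function x ↦ (−s·x^{−s}) · log(x) · f_{μ,σ,s}(x) is integrable on (0, ∞) and ∫₀^∞ (−s·x^{−s}) · log(x) · f_{μ,σ,s}(x) dx = (1/(σ+1)) · (1 + (μ+1)/(μσ)) · (ψ(μ) − log(μσ) + 1/μ) + 1/(μσ(σ+1)). -/

import Mathlib

open MeasureTheory Real

/-- The weighted exponential-family density with generator `T(x) = x^(-s)`. -/
noncomputable def weightedExpDensity (μ σ s x : ℝ) : ℝ :=
  ((μ * σ) ^ (μ + 1) / ((σ + 1) * Real.Gamma (μ + 1))) * (1 + x ^ (-s)) * (|s| / x) *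
    x ^ (-(s * μ)) * Real.exp (-(μ * σ) * x ^ (-s))

/-- The digamma function `ψ(t) = Γ'(t)/Γ(t)`. -/
noncomputable def digamma (t : ℝ) : ℝ := deriv Real.Gamma t / Real.Gamma t

section Aux
open Set Filter Asymptotics
open scoped Topology

open Complex in
lemma gammaLog_aux {a : ℝ} (ha : 0 < a) :
    IntegrableOn (fun t : ℝ => t ^ (a - 1) * Real.exp (-t) * Real.log t) (Set.Ioi 0) ∧
    HasDerivAt Real.Gamma (∫ t in Set.Ioi (0:ℝ), t ^ (a - 1) * Real.exp (-t) * Real.log t) a := by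
  set f : ℝ → ℂ := fun t => ((Real.exp (-t) : ℝ) : ℂ) with hf
  have H := mellin_hasDerivAt_of_isBigO_rpow (a := a + 1) (b := 0) (f := f) (s := (a : ℂ))
    ?_ ?_ (by simpa using lt_add_one a) ?_ (by simpa using ha)
  · have key : ∀ t ∈ Set.Ioi (0:ℝ),
        ((t : ℂ) ^ ((a:ℂ) - 1) • (Real.log t • f t))
          = ((t ^ (a - 1) * Real.exp (-t) * Real.log t : ℝ) : ℂ) := by
      intro t ht
      rw [Set.mem_Ioi] at ht
      rw [show ((a:ℂ) - 1) = ((a - 1 : ℝ) : ℂ) by push_cast; ring,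
        ← Complex.ofReal_cpow ht.le]
      simp [hf, Complex.real_smul, smul_eq_mul]
      push_cast
      ring
    have hint : IntegrableOn (fun t : ℝ =>
        ((t ^ (a - 1) * Real.exp (-t) * Real.log t : ℝ) : ℂ)) (Set.Ioi 0) := by
      exact (H.1.congr_fun key measurableSet_Ioi)
    have hintR : IntegrableOn (fun t : ℝ =>
        t ^ (a - 1) * Real.exp (-t) * Real.log t) (Set.Ioi 0) := by
      have h := hint.re
      simp only [RCLike.re_to_complex, Complex.ofReal_re] at h
      exact h
    refine ⟨hintR, ?_⟩
    have hmel : mellin (fun t => Real.log t • f t) (a : ℂ)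
        = ((∫ t in Set.Ioi (0:ℝ), t ^ (a - 1) * Real.exp (-t) * Real.log t : ℝ) : ℂ) := by
      rw [mellin, setIntegral_congr_fun measurableSet_Ioi key]
      exact integral_ofReal
    have h2 := H.2
    rw [hmel, ← GammaIntegral_eq_mellin] at h2
    have h3 := h2.real_of_complex
    simp only [Complex.ofReal_re] at h3
    refine h3.congr_of_eventuallyEq ?_
    filter_upwards [eventually_gt_nhds ha] with x hx
    rw [Real.Gamma, Complex.Gamma_eq_integral (by simpa using hx : 0 < Complex.re x)]
  · exact (Continuous.continuousOn (by continuity)).locallyIntegrableOn measurableSet_Ioi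
  · have h1 : (fun x : ℝ => Real.exp (-x)) =O[atTop] fun x : ℝ => x ^ (-(a+1)) := by
      simpa only [neg_one_mul] using (isLittleO_exp_neg_mul_rpow_atTop zero_lt_one (-(a+1))).isBigO
    rw [← isBigO_norm_left]
    rw [← isBigO_norm_left] at h1
    convert h1 using 2 with x
    simp [hf, Real.abs_exp, Real.norm_eq_abs, Complex.norm_exp]
  · simp_rw [neg_zero, rpow_zero]
    refine isBigO_const_of_tendsto (?_ : Tendsto _ _ (𝓝 (1 : ℂ))) one_ne_zero
    rw [(by simp : (1 : ℂ) = Real.exp (-0))]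
    exact (continuous_ofReal.comp (Real.continuous_exp.comp continuous_neg)).continuousWithinAt

lemma intB {a b : ℝ} (ha : 0 < a) (hb : 0 < b) :
    IntegrableOn (fun u : ℝ => u ^ (a - 1) * Real.exp (-(b * u)) * Real.log u) (Set.Ioi 0) ∧
    ∫ u in Set.Ioi (0:ℝ), u ^ (a - 1) * Real.exp (-(b * u)) * Real.log u
      = (deriv Real.Gamma a - Real.Gamma a * Real.log b) / b ^ a := by
  set g : ℝ → ℝ := fun t => t ^ (a - 1) * Real.exp (-t) * (Real.log t - Real.log b) with hgdef
  have hg_eq : g = fun t => t ^ (a - 1) * Real.exp (-t) * Real.log t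
      - Real.log b * (Real.exp (-t) * t ^ (a - 1)) := by
    funext t; simp only [hgdef]; ring
  have hg_int : IntegrableOn g (Set.Ioi 0) := by
    rw [hg_eq]
    exact (gammaLog_aux ha).1.sub ((Real.GammaIntegral_convergent ha).const_mul _)
  have hg_val : ∫ t in Set.Ioi (0:ℝ), g t
      = deriv Real.Gamma a - Real.Gamma a * Real.log b := by
    rw [hg_eq, integral_sub (gammaLog_aux ha).1 ((Real.GammaIntegral_convergent ha).const_mul _),
      integral_const_mul, (gammaLog_aux ha).2.deriv, ← Real.Gamma_eq_integral ha]
    ring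
  have key : ∀ u ∈ Set.Ioi (0:ℝ),
      u ^ (a - 1) * Real.exp (-(b * u)) * Real.log u = (b ^ (a - 1))⁻¹ * g (b * u) := by
    intro u hu
    rw [Set.mem_Ioi] at hu
    simp only [hgdef]
    rw [Real.mul_rpow hb.le hu.le, Real.log_mul hb.ne' hu.ne']
    field_simp
    ring
  have hcomp : IntegrableOn (fun u => (b ^ (a - 1))⁻¹ * g (b * u)) (Set.Ioi (0:ℝ)) := by
    apply Integrable.const_mul
    have := (integrableOn_Ioi_comp_mul_left_iff g 0 hb).mpr (by simpa using hg_int)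
    exact this
  have hba : b ^ a = b ^ (a - 1) * b := by
    rw [← Real.rpow_add_one hb.ne' (a - 1), sub_add_cancel]
  constructor
  · exact (hcomp.congr_fun (fun u hu => (key u hu).symm) measurableSet_Ioi)
  · rw [setIntegral_congr_fun measurableSet_Ioi key, integral_const_mul,
      integral_comp_mul_left_Ioi g 0 hb, mul_zero, hg_val, smul_eq_mul, hba]
    field_simp

lemma intA {a b : ℝ} (ha : 0 < a) (hb : 0 < b) :
    IntegrableOn (fun u : ℝ => u ^ (a - 1) * Real.exp (-(b * u))) (Set.Ioi 0) ∧
    ∫ u in Set.Ioi (0:ℝ), u ^ (a - 1) * Real.exp (-(b * u))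
      = Real.Gamma a / b ^ a := by
  constructor
  · have h0 : IntegrableOn (fun t : ℝ => t ^ (a - 1) * Real.exp (-t)) (Set.Ioi 0) :=
      (Real.GammaIntegral_convergent ha).congr_fun (fun t _ => mul_comm _ _) measurableSet_Ioi
    have := (integrableOn_Ioi_comp_mul_left_iff
      (fun t : ℝ => t ^ (a - 1) * Real.exp (-t)) 0 hb).mpr (by simpa using h0)
    have h2 : IntegrableOn (fun u : ℝ => (b ^ (a-1))⁻¹ * ((b*u) ^ (a - 1) * Real.exp (-(b*u))))
        (Set.Ioi 0) := this.const_mul _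
    apply (h2.congr_fun ?_ measurableSet_Ioi)
    intro u hu
    rw [Set.mem_Ioi] at hu
    simp only []
    rw [Real.mul_rpow hb.le hu.le]
    field_simp
  · rw [Real.integral_rpow_mul_exp_neg_mul_Ioi ha hb, one_div, Real.inv_rpow hb.le]
    rw [div_eq_mul_inv, mul_comm]

lemma deriv_Gamma_add_one' {x : ℝ} (hx : 0 < x) :
    deriv Real.Gamma (x + 1) = Real.Gamma x + x * deriv Real.Gamma x := by
  have hdiff : ∀ {y : ℝ}, 0 < y → DifferentiableAt ℝ Real.Gamma y := fun {y} hy =>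
    Real.differentiableAt_Gamma (fun m =>
      (lt_of_le_of_lt (neg_nonpos.mpr (Nat.cast_nonneg m)) hy).ne')
  have hev : (fun y => Real.Gamma (y + 1)) =ᶠ[𝓝 x] fun y => y * Real.Gamma y := by
    filter_upwards [eventually_gt_nhds hx] with y hy using Real.Gamma_add_one hy.ne'
  have h1 := hev.deriv_eq
  rw [deriv_comp_add_const] at h1
  rw [h1, deriv_fun_mul differentiableAt_fun_id (hdiff hx)]
  simp

end Aux

open Set in
/-- `E(Y₅*) = (1/(σ+1))·(1 + (μ+1)/(μσ))·(ψ(μ) − log(μσ) + 1/μ) + 1/(μσ(σ+1))` for the weighted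
exponential family with generator `T(x) = x^(−s)`, where `Y₅* = T'(x)·x·log(x)`. -/
theorem weightedExp_expectation_Y5 (μ σ s : ℝ) (hμ : 0 < μ) (hσ : 0 < σ) (hs : s ≠ 0) :
    IntegrableOn
      (fun x : ℝ => (-s * x ^ (-s)) * Real.log x * weightedExpDensity μ σ s x) (Set.Ioi 0) ∧
    ∫ x in Set.Ioi (0 : ℝ), (-s * x ^ (-s)) * Real.log x * weightedExpDensity μ σ s x
      = (1 / (σ + 1)) * (1 + (μ + 1) / (μ * σ)) * (digamma μ - Real.log (μ * σ) + 1 / μ)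
        + 1 / (μ * σ * (σ + 1)) := by
  set b : ℝ := μ * σ with hbdef
  have hb : 0 < b := mul_pos hμ hσ
  set C : ℝ := b ^ (μ + 1) / ((σ + 1) * Real.Gamma (μ + 1)) with hCdef
  set p : ℝ := -s with hpdef
  have hp : p ≠ 0 := neg_ne_zero.mpr hs
  set G : ℝ → ℝ := fun u =>
    C * (u ^ ((μ + 1) - 1) * Real.exp (-(b * u)) * Real.log u)
      + C * (u ^ ((μ + 2) - 1) * Real.exp (-(b * u)) * Real.log u) with hGdef
  have hμ1 : (0:ℝ) < μ + 1 := by linarith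
  have hμ2 : (0:ℝ) < μ + 2 := by linarith
  have hGint : IntegrableOn G (Set.Ioi 0) :=
    ((intB hμ1 hb).1.const_mul C).add ((intB hμ2 hb).1.const_mul C)
  have hGval : ∫ u in Set.Ioi (0:ℝ), G u
      = C * ((deriv Real.Gamma (μ+1) - Real.Gamma (μ+1) * Real.log b) / b ^ (μ+1))
        + C * ((deriv Real.Gamma (μ+2) - Real.Gamma (μ+2) * Real.log b) / b ^ (μ+2)) := by
    rw [hGdef, integral_add ((intB hμ1 hb).1.const_mul C) ((intB hμ2 hb).1.const_mul C),
      integral_const_mul, integral_const_mul, (intB hμ1 hb).2, (intB hμ2 hb).2]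
  have key : ∀ x ∈ Set.Ioi (0:ℝ),
      (-s * x ^ (-s)) * Real.log x * weightedExpDensity μ σ s x
        = (|p| * x ^ (p - 1)) • G (x ^ p) := by
    intro x hx
    rw [Set.mem_Ioi] at hx
    have hxp : (0:ℝ) < x ^ p := Real.rpow_pos_of_pos hx p
    rw [smul_eq_mul, hGdef]
    simp only [weightedExpDensity]
    have hσ1 : σ + 1 ≠ 0 := by positivity
    have hΓ1 : Real.Gamma (μ + 1) ≠ 0 := (Real.Gamma_pos_of_pos (by linarith)).ne'
    rw [Real.log_rpow hx, show ((μ+1) - 1 : ℝ) = μ by ring, show ((μ+2) - 1 : ℝ) = μ + 1 by ring,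
      ← Real.rpow_mul hx.le, ← Real.rpow_mul hx.le,
      show p * (μ + 1) = p * μ + p by ring, Real.rpow_add hx,
      Real.rpow_sub hx, Real.rpow_one,
      show -(s * μ) = p * μ by rw [hpdef]; ring,
      show -s = p from hpdef.symm,
      show |s| = |p| by rw [hpdef, abs_neg],
      ← hbdef, neg_mul, hCdef]
    field_simp
    ring
  constructor
  · exact (((integrableOn_Ioi_comp_rpow_iff G hp).mpr hGint).congr_fun
      (fun x hx => (key x hx).symm) measurableSet_Ioi)
  · rw [setIntegral_congr_fun measurableSet_Ioi key]
    rw [show (fun x : ℝ => (|p| * x ^ (p - 1)) • G (x ^ p)) = fun x => (|p| * x ^ (p-1)) • G (x ^ p) from rfl] -- noop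
    rw [MeasureTheory.integral_comp_rpow_Ioi G hp, hGval]
    have hΓ : Real.Gamma (μ + 1) = μ * Real.Gamma μ := Real.Gamma_add_one hμ.ne'
    have hΓ2 : Real.Gamma (μ + 2) = (μ + 1) * Real.Gamma (μ + 1) := by
      rw [show (μ + 2 : ℝ) = (μ + 1) + 1 by ring, Real.Gamma_add_one hμ1.ne']
    have hD1 : deriv Real.Gamma (μ + 1) = Real.Gamma μ + μ * deriv Real.Gamma μ :=
      deriv_Gamma_add_one' hμ
    have hD2 : deriv Real.Gamma (μ + 2)
        = Real.Gamma (μ + 1) + (μ + 1) * deriv Real.Gamma (μ + 1) := by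
      rw [show (μ + 2 : ℝ) = (μ + 1) + 1 by ring]; exact deriv_Gamma_add_one' hμ1
    have hb2 : b ^ (μ + 2) = b ^ (μ + 1) * b := by
      rw [show (μ + 2 : ℝ) = (μ + 1) + 1 by ring, Real.rpow_add_one hb.ne']
    have hΓμ : Real.Gamma μ ≠ 0 := (Real.Gamma_pos_of_pos hμ).ne'
    have hB : b ^ (μ + 1) ≠ 0 := (Real.rpow_pos_of_pos hb _).ne'
    have hσ1 : σ + 1 ≠ 0 := by positivity
    rw [hD2, hD1, hΓ2, hΓ, hb2, hCdef, hΓ]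
    simp only [digamma]
    field_simp
    ring
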